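/- arXiv:2409.16173 — 2 statements merged into one kernel-verified Lean document; each statement's English description precedes it below -/
import Mathlib

section
/- Let I be a roommates instance with ties, let I' be a 3-copy instance of I, let M' be a stable half-matching of I' with respect to the strict orders ≻'_v, and let M be the projection of M'. Then for every weakly stable half-matching N of I, Σ_{e∈E} N(e) ≤ (3/2)·Σ_{e∈E} M(e). -/
open Finset

namespace SR

variable {V E : Type*} [Fintype V] [Fintype E] [DecidableEq V] [DecidableEq E]

/-- The set of edges incident to a vertex `v`.  A multigraph is given by a finite
edge type `E`, a finite vertex type `V` and two endpoint maps `es et : E → V`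
(each edge is the unordered pair of its two distinct endpoints; the orientation
merely records a fixed ordering of the vertices). -/
def incident (es et : E → V) (v : V) : Finset E :=
  univ.filter fun e => es e = v ∨ et e = v

/-- `Σ_{e ∈ E(v)} M(e)`. -/
noncomputable def degSum (es et : E → V) (M : E → ℝ) (v : V) : ℝ :=
  ∑ e ∈ incident es et v, M e

/-- A fractional-matching. -/
def IsFrac (es et : E → V) (M : E → ℝ) : Prop :=
  (∀ e, 0 ≤ M e) ∧ ∀ v, degSum es et M v ≤ 1

/-- A half-matching. -/
def IsHalf (es et : E → V) (M : E → ℝ) : Prop :=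
  IsFrac es et M ∧ ∀ e, M e = 0 ∨ M e = 1 / 2 ∨ M e = 1

/-- An integral matching (as a fractional-matching). -/
def IsIntegral (M : E → ℝ) : Prop := ∀ e, M e = 0 ∨ M e = 1

/-- The size `Σ_{e ∈ E} M(e)` of a fractional-matching. -/
noncomputable def size (M : E → ℝ) : ℝ := ∑ e, M e

/-- `v` is saturated by `M`. -/
def Saturated (es et : E → V) (M : E → ℝ) (v : V) : Prop :=
  degSum es et M v = 1

/-- `p_v(M)`: the minimum of `p_v(e)` over incident edges with `M(e) > 0` if `v`
is saturated, and `p_v(∅)` otherwise. -/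
noncomputable def pval (es et : E → V) (p : V → E → ℝ) (pE : V → ℝ)
    (M : E → ℝ) (v : V) : ℝ :=
  if h : degSum es et M v = 1 ∧ ((incident es et v).filter fun e => 0 < M e).Nonempty
  then ((incident es et v).filter fun e => 0 < M e).inf' h.2 (p v)
  else pE v

/-- An edge blocks `M` (weak stability, preferences with ties). -/
def WeakBlocks (es et : E → V) (p : V → E → ℝ) (pE : V → ℝ)
    (M : E → ℝ) (e : E) : Prop :=
  M e < 1 ∧ pval es et p pE M (es e) < p (es e) e ∧
    pval es et p pE M (et e) < p (et e) e

/-- Weak stability. -/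
def WeaklyStable (es et : E → V) (p : V → E → ℝ) (pE : V → ℝ)
    (M : E → ℝ) : Prop :=
  ∀ e, ¬ WeakBlocks es et p pE M e

/-- An edge `γ`-blocks `M`. -/
def GammaBlocks (es et : E → V) (p : V → E → ℝ) (pE : V → ℝ)
    (γ δ : V → E → ℝ) (M : E → ℝ) (e : E) : Prop :=
  0 ≤ min (p (es e) e - pval es et p pE M (es e) - γ (es e) e)
        (p (et e) e - pval es et p pE M (et e) - δ (et e) e) ∨
  0 ≤ min (p (es e) e - pval es et p pE M (es e) - δ (es e) e)
        (p (et e) e - pval es et p pE M (et e) - γ (et e) e)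

/-- `γ`-stability. -/
def GammaStable (es et : E → V) (p : V → E → ℝ) (pE : V → ℝ)
    (γ δ : V → E → ℝ) (M : E → ℝ) : Prop :=
  ∀ e, ¬ GammaBlocks es et p pE γ δ M e

/-- `pref v` is a strict linear order on the edges incident to `v`, for each `v`. -/
def IsStrictPref (es et : E → V) (pref : V → E → E → Prop) : Prop :=
  ∀ v, (∀ e ∈ incident es et v, ¬ pref v e e) ∧
    (∀ e ∈ incident es et v, ∀ f ∈ incident es et v, ∀ g ∈ incident es et v,
      pref v e f → pref v f g → pref v e g) ∧
    (∀ e ∈ incident es et v, ∀ f ∈ incident es et v, e ≠ f → pref v e f ∨ pref v f e)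

/-- An edge blocks `M` (strict preferences). -/
def StrictBlocks (es et : E → V) (pref : V → E → E → Prop)
    (M : E → ℝ) (e : E) : Prop :=
  M e < 1 ∧ ∀ w, (es e = w ∨ et e = w) →
    (¬ Saturated es et M w ∨ ∃ f ∈ incident es et w, 0 < M f ∧ pref w e f)

/-- Stability for strict preferences. -/
def StableStrict (es et : E → V) (pref : V → E → E → Prop) (M : E → ℝ) : Prop :=
  ∀ e, ¬ StrictBlocks es et pref M e

/-- The extension of the strict preferences of `v` to `E(v) ∪ {∅}`, where `∅ = none`. -/
def prefExt (pref : V → E → E → Prop) (v : V) : Option E → Option E → Prop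
  | some e, some f => pref v e f
  | some _, none => True
  | none, _ => False

/-- `vote_v(a,b) ∈ {+1, 0, -1}`. -/
noncomputable def vote (pref : V → E → E → Prop) (v : V) (a b : Option E) : ℝ :=
  haveI : Decidable (prefExt pref v a b) := Classical.propDecidable _
  if a = b then 0 else if prefExt pref v a b then 1 else -1

/-- `E(v) ∪ {∅}` as a finset of `Option E`. -/
def optIncident (es et : E → V) (v : V) : Finset (Option E) :=
  insert none ((incident es et v).map Function.Embedding.some)

/-- A feasible pairing between the fractional-matchings `M` and `N`. -/
def FeasiblePairing (es et : E → V) (M N : E → ℝ)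
    (φ : V → Option E → Option E → ℝ) : Prop :=
  (∀ v a b, 0 ≤ φ v a b) ∧
  (∀ v, ∀ e ∈ incident es et v,
      ∑ f ∈ optIncident es et v, φ v (some e) f = max (M e - N e) 0) ∧
  (∀ v, ∀ e ∈ incident es et v,
      ∑ f ∈ optIncident es et v, φ v f (some e) = max (N e - M e) 0) ∧
  (∀ v, ∑ f ∈ optIncident es et v, φ v f none
      = max (degSum es et M v - degSum es et N v) 0) ∧
  (∀ v, ∑ f ∈ optIncident es et v, φ v none f
      = max (degSum es et N v - degSum es et M v) 0)

/-- A sensible pairing between the fractional-matchings `M` and `N`. -/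
def SensiblePairing (es et : E → V) (M N : E → ℝ)
    (φ : V → Option E → Option E → ℝ) : Prop :=
  (∀ v a b, 0 ≤ φ v a b) ∧
  (∀ v, ∀ e ∈ incident es et v,
      ∑ f ∈ optIncident es et v, φ v (some e) f = M e) ∧
  (∀ v, ∀ e ∈ incident es et v,
      ∑ f ∈ optIncident es et v, φ v f (some e) = N e) ∧
  (∀ v, 0 < ∑ f ∈ optIncident es et v, φ v none f → degSum es et M v < 1) ∧
  (∀ v, 0 < ∑ f ∈ optIncident es et v, φ v f none → degSum es et N v < 1) ∧
  (∀ e, φ (es e) (some e) (some e) = φ (et e) (some e) (some e))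

/-- `Δ(M,N,φ)`. -/
noncomputable def Delta (es et : E → V) (pref : V → E → E → Prop)
    (φ : V → Option E → Option E → ℝ) : ℝ :=
  ∑ v, ∑ a ∈ optIncident es et v, ∑ b ∈ optIncident es et v,
    φ v a b * vote pref v a b

/-- A popular fractional-matching. -/
def PopularFrac (es et : E → V) (pref : V → E → E → Prop) (M : E → ℝ) : Prop :=
  ∀ N, IsFrac es et N → ∀ φ, FeasiblePairing es et M N φ → 0 ≤ Delta es et pref φ

/-- An extra-popular fractional-matching. -/
def ExtraPopular (es et : E → V) (pref : V → E → E → Prop) (M : E → ℝ) : Prop :=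
  ∀ N, IsFrac es et N → ∀ φ, SensiblePairing es et M N φ → 0 ≤ Delta es et pref φ

/-- A barely-defendable fractional-matching. -/
def BarelyDefendable (es et : E → V) (pref : V → E → E → Prop) (M : E → ℝ) : Prop :=
  ∀ N, IsFrac es et N → ∃ φ, SensiblePairing es et M N φ ∧ 0 ≤ Delta es et pref φ

/-- The mixed comparison score of `M` versus `N`. -/
noncomputable def mixedScore (es et : E → V) (pref : V → E → E → Prop)
    (M N : E → ℝ) : ℝ :=
  ∑ v, ((∑ e ∈ incident es et v, ∑ f ∈ incident es et v,
        M e * N f * vote pref v (some e) (some f))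
    + (∑ e ∈ incident es et v,
        M e * (1 - degSum es et N v) * vote pref v (some e) none)
    + (∑ f ∈ incident es et v,
        N f * (1 - degSum es et M v) * vote pref v none (some f)))

/-- A popular mixed-matching. -/
def PopularMixed (es et : E → V) (pref : V → E → E → Prop) (M : E → ℝ) : Prop :=
  ∀ N, IsFrac es et N → 0 ≤ mixedScore es et pref M N

/-- The weight `Σ_e ω(e)·M(e)` of a fractional-matching. -/
noncomputable def wsize (ω M : E → ℝ) : ℝ := ∑ e, ω e * M e

/-- `c` is the "own" copy `e^k` at the endpoint `v = v_k`: the copy `(e,0)` for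
the first endpoint and the copy `(e,2)` for the second endpoint. -/
def ownCopy (es et : E → V) (v : V) (c : E × Fin 3) : Prop :=
  (v = es c.1 ∧ c.2 = 0) ∨ (v = et c.1 ∧ c.2 = 2)

/-- `c` is the middle copy `e^0`. -/
def midCopy (c : E × Fin 3) : Prop := c.2 = 1

/-- `c` is the other endpoint's copy `e^m`, `m ≠ k`, at the endpoint `v = v_k`. -/
def otherCopy (es et : E → V) (v : V) (c : E × Fin 3) : Prop :=
  (v = es c.1 ∧ c.2 = 2) ∨ (v = et c.1 ∧ c.2 = 0)

/-! ### Auxiliary machinery for Statement 7 -/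

/-- The other endpoint of `e` as seen from `v`. -/
def otherEndA (es et : E → V) (e : E) (v : V) : V := if es e = v then et e else es e

/-- `v` is *needy*: some `N`-positive edge at `v` has an `M`-unsaturated other
endpoint. -/
def NeedyA (es et : E → V) (N M : E → ℝ) (v : V) : Prop :=
  ∃ e, (es e = v ∨ et e = v) ∧ 0 < N e ∧ degSum es et M (otherEndA es et e v) < 1

lemma otherEndA_s (es et : E → V) (e : E) : otherEndA es et e (es e) = et e := by
  simp [otherEndA]

lemma otherEndA_t (es et : E → V) (e : E) (h : es e ≠ et e) :
    otherEndA es et e (et e) = es e := by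
  simp [otherEndA, h]

lemma deg_eq_aux (es et : E → V) (M' : E × Fin 3 → ℝ) (v : V) :
    degSum (fun c : E × Fin 3 => es c.1) (fun c => et c.1) M' v
      = degSum es et (fun e => ∑ k : Fin 3, M' (e, k)) v := by
  have h : incident (fun c : E × Fin 3 => es c.1) (fun c => et c.1) v
      = (incident es et v) ×ˢ (univ : Finset (Fin 3)) := by
    ext ⟨e, k⟩
    simp [incident]
  simp only [degSum, h, Finset.sum_product]

lemma sum_incident_eq (es et : E → V) (hne : ∀ e, es e ≠ et e) (g : E → V → ℝ) :
    ∑ v, ∑ f ∈ incident es et v, g f v = ∑ f, (g f (es f) + g f (et f)) := by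
  classical
  calc ∑ v, ∑ f ∈ incident es et v, g f v
      = ∑ v, ∑ f, if es f = v ∨ et f = v then g f v else 0 := by
        refine Finset.sum_congr rfl fun v _ => ?_
        rw [incident, Finset.sum_filter]
    _ = ∑ f, ∑ v, if es f = v ∨ et f = v then g f v else 0 := Finset.sum_comm
    _ = ∑ f, (g f (es f) + g f (et f)) := by
        refine Finset.sum_congr rfl fun f _ => ?_
        have h1 : ∀ v : V, (es f = v ∨ et f = v) ↔ v ∈ ({es f, et f} : Finset V) := by
          intro v; simp [eq_comm]
        calc (∑ v, if es f = v ∨ et f = v then g f v else 0)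
            = ∑ v, if v ∈ ({es f, et f} : Finset V) then g f v else 0 :=
              Finset.sum_congr rfl fun v _ => if_congr (h1 v) rfl rfl
          _ = ∑ v ∈ ({es f, et f} : Finset V), g f v := by
              rw [Finset.sum_ite_mem, Finset.univ_inter]
          _ = g f (es f) + g f (et f) := Finset.sum_pair (hne f)

lemma pval_le_aux (es et : E → V) (p : V → E → ℝ) (pE : V → ℝ) (N : E → ℝ)
    (v : V) (e : E) (he : e ∈ incident es et v) (hpos : 0 < N e)
    (hp0 : 0 ≤ p v e) (hpE0 : pE v ≤ 0) :
    pval es et p pE N v ≤ p v e := by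
  unfold pval
  split
  · exact Finset.inf'_le _ (Finset.mem_filter.2 ⟨he, hpos⟩)
  · exact hpE0.trans hp0

/-- The key structural lemma: if `u` is unsaturated by the projection of a
stable half-matching `M'` of the 3-copy instance, then any neighbour `v` of `u`
(via an edge `e`) is saturated, and moreover every positive copy at `v` is an
own copy of value `≥ p v e` or a middle copy of value `> p v e`. -/
lemma keyA (es et : E → V) (hne : ∀ e, es e ≠ et e) (p : V → E → ℝ)
    (pref' : V → (E × Fin 3) → (E × Fin 3) → Prop)
    (hlin : IsStrictPref (fun c => es c.1) (fun c => et c.1) pref')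
    (hi : ∀ v, ∀ c ∈ incident (fun c : E × Fin 3 => es c.1) (fun c => et c.1) v,
      ∀ d ∈ incident (fun c : E × Fin 3 => es c.1) (fun c => et c.1) v,
        otherCopy es et v d → (ownCopy es et v c ∨ midCopy c) → pref' v c d)
    (hiii : ∀ v, ∀ c ∈ incident (fun c : E × Fin 3 => es c.1) (fun c => et c.1) v,
      ∀ d ∈ incident (fun c : E × Fin 3 => es c.1) (fun c => et c.1) v,
        midCopy c → ownCopy es et v d → (pref' v c d ↔ p v d.1 < p v c.1))
    (hiv : ∀ v, ∀ c ∈ incident (fun c : E × Fin 3 => es c.1) (fun c => et c.1) v,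
      ∀ d ∈ incident (fun c : E × Fin 3 => es c.1) (fun c => et c.1) v,
        p v d.1 < p v c.1 →
        ((ownCopy es et v c ∧ ownCopy es et v d) ∨ (midCopy c ∧ midCopy d) ∨
          (otherCopy es et v c ∧ otherCopy es et v d)) → pref' v c d)
    (M' : E × Fin 3 → ℝ)
    (hM' : IsHalf (fun c => es c.1) (fun c => et c.1) M')
    (hstab : StableStrict (fun c => es c.1) (fun c => et c.1) pref' M')
    (e : E) (u v : V)
    (huv : (es e = u ∧ et e = v) ∨ (es e = v ∧ et e = u))
    (hu : degSum es et (fun e => ∑ k : Fin 3, M' (e, k)) u < 1) :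
    degSum es et (fun e => ∑ k : Fin 3, M' (e, k)) v = 1 ∧
      ∀ g : E, ∀ k : Fin 3, (es g = v ∨ et g = v) → 0 < M' (g, k) →
        (ownCopy es et v (g, k) ∧ p v e ≤ p v g) ∨ (k = 1 ∧ p v e < p v g) := by
  classical
  have hnn : ∀ c, 0 ≤ M' c := hM'.1.1
  have hMnn : ∀ f : E, 0 ≤ ∑ k : Fin 3, M' (f, k) :=
    fun f => Finset.sum_nonneg fun k _ => hnn (f, k)
  obtain ⟨kc, hcown⟩ : ∃ kc : Fin 3, ownCopy es et v (e, kc) := by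
    rcases huv with ⟨h1, h2⟩ | ⟨h1, h2⟩
    · exact ⟨2, Or.inr ⟨h2.symm, rfl⟩⟩
    · exact ⟨0, Or.inl ⟨h1.symm, rfl⟩⟩
  have hcv : es e = v ∨ et e = v := by
    rcases hcown with ⟨h, _⟩ | ⟨h, _⟩
    · exact Or.inl h.symm
    · exact Or.inr h.symm
  have hcinc : (e, kc) ∈ incident (fun c : E × Fin 3 => es c.1) (fun c => et c.1) v := by
    simpa [incident] using hcv
  have heu : e ∈ incident es et u := by
    rcases huv with ⟨h1, _⟩ | ⟨_, h2⟩
    · simp [incident, h1]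
    · simp [incident, h2]
  have hMe_lt : M' (e, kc) < 1 := by
    have h1 : M' (e, kc) ≤ ∑ k : Fin 3, M' (e, k) :=
      Finset.single_le_sum (fun k _ => hnn (e, k)) (Finset.mem_univ kc)
    have h2 : (∑ k : Fin 3, M' (e, k))
        ≤ degSum es et (fun e => ∑ k : Fin 3, M' (e, k)) u :=
      Finset.single_le_sum (fun f _ => hMnn f) heu
    linarith
  have hnb : ¬ ∀ w, (es e = w ∨ et e = w) →
      (¬ Saturated (fun c : E × Fin 3 => es c.1) (fun c => et c.1) M' w ∨
        ∃ d ∈ incident (fun c : E × Fin 3 => es c.1) (fun c => et c.1) w,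
          0 < M' d ∧ pref' w (e, kc) d) :=
    fun hall => hstab (e, kc) ⟨hMe_lt, hall⟩
  push_neg at hnb
  obtain ⟨w, hwend, hsatw, hnopref⟩ := hnb
  have hsatM : degSum es et (fun e => ∑ k : Fin 3, M' (e, k)) w = 1 := by
    rw [← deg_eq_aux]; exact hsatw
  have hwv : w = v := by
    rcases hwend with h | h <;> rcases huv with ⟨h1, h2⟩ | ⟨h1, h2⟩
    · exact absurd hsatM (by rw [← h, h1]; exact ne_of_lt hu)
    · rw [← h, h1]
    · rw [← h, h2]
    · exact absurd hsatM (by rw [← h, h2]; exact ne_of_lt hu)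
  subst hwv
  refine ⟨hsatM, ?_⟩
  intro g k hg hpos
  have hdinc : (g, k) ∈ incident (fun c : E × Fin 3 => es c.1) (fun c => et c.1) w := by
    simpa [incident] using hg
  have hnp : ¬ pref' w (e, kc) (g, k) := hnopref (g, k) hdinc hpos
  have hkc01 : kc = 0 ∨ kc = 2 := by
    rcases hcown with ⟨_, h⟩ | ⟨_, h⟩
    · exact Or.inl h
    · exact Or.inr h
  fin_cases k
  · by_cases hgs : es g = w
    · left
      refine ⟨Or.inl ⟨hgs.symm, rfl⟩, ?_⟩
      by_contra hlt
      push_neg at hlt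
      exact hnp (hiv w (e, kc) hcinc (g, 0) hdinc hlt
        (Or.inl ⟨hcown, Or.inl ⟨hgs.symm, rfl⟩⟩))
    · exfalso
      have hgt : et g = w := hg.resolve_left hgs
      exact hnp (hi w (e, kc) hcinc (g, 0) hdinc (Or.inr ⟨hgt.symm, rfl⟩) (Or.inl hcown))
  · right
    refine ⟨rfl, ?_⟩
    have hneq : (e, kc) ≠ (g, (1 : Fin 3)) := by
      intro hh
      have h2 : kc = 1 := congrArg Prod.snd hh
      rcases hkc01 with h | h <;> rw [h] at h2 <;> exact absurd h2 (by decide)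
    have htot := (hlin w).2.2 (e, kc) hcinc (g, 1) hdinc hneq
    have hdc : pref' w (g, 1) (e, kc) := htot.resolve_left hnp
    have hfin := (hiii w (g, 1) hdinc (e, kc) hcinc rfl hcown).mp hdc
    simpa using hfin
  · by_cases hgt : et g = w
    · left
      refine ⟨Or.inr ⟨hgt.symm, rfl⟩, ?_⟩
      by_contra hlt
      push_neg at hlt
      exact hnp (hiv w (e, kc) hcinc (g, 2) hdinc hlt
        (Or.inl ⟨hcown, Or.inr ⟨hgt.symm, rfl⟩⟩))
    · exfalso
      have hgs : es g = w := hg.resolve_right hgt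
      exact hnp (hi w (e, kc) hcinc (g, 2) hdinc (Or.inl ⟨hgs.symm, rfl⟩) (Or.inl hcown))

/-- The projection of a stable half-matching of a 3-copy
instance `3/2`-approximates every weakly stable half-matching. -/
theorem projection_three_halves_approx_weak
    {V E : Type*} [Fintype V] [Fintype E] [DecidableEq V] [DecidableEq E]
    (es et : E → V) (hne : ∀ e, es e ≠ et e)
    (p : V → E → ℝ) (pE : V → ℝ)
    (hp : ∀ v, ∀ e ∈ incident es et v, 0 ≤ p v e)
    (hpE : ∀ v, pE v ≤ 0)
    (pref' : V → (E × Fin 3) → (E × Fin 3) → Prop)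
    (hlin : IsStrictPref (fun c => es c.1) (fun c => et c.1) pref')
    (hi : ∀ v, ∀ c ∈ incident (fun c : E × Fin 3 => es c.1) (fun c => et c.1) v,
      ∀ d ∈ incident (fun c : E × Fin 3 => es c.1) (fun c => et c.1) v,
        otherCopy es et v d → (ownCopy es et v c ∨ midCopy c) → pref' v c d)
    (hii : ∀ v, ∀ c ∈ incident (fun c : E × Fin 3 => es c.1) (fun c => et c.1) v,
      ∀ d ∈ incident (fun c : E × Fin 3 => es c.1) (fun c => et c.1) v,
        c.1 = d.1 → ownCopy es et v c → midCopy d → pref' v c d)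
    (hiii : ∀ v, ∀ c ∈ incident (fun c : E × Fin 3 => es c.1) (fun c => et c.1) v,
      ∀ d ∈ incident (fun c : E × Fin 3 => es c.1) (fun c => et c.1) v,
        midCopy c → ownCopy es et v d → (pref' v c d ↔ p v d.1 < p v c.1))
    (hiv : ∀ v, ∀ c ∈ incident (fun c : E × Fin 3 => es c.1) (fun c => et c.1) v,
      ∀ d ∈ incident (fun c : E × Fin 3 => es c.1) (fun c => et c.1) v,
        p v d.1 < p v c.1 →
        ((ownCopy es et v c ∧ ownCopy es et v d) ∨ (midCopy c ∧ midCopy d) ∨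
          (otherCopy es et v c ∧ otherCopy es et v d)) → pref' v c d)
    (M' : E × Fin 3 → ℝ)
    (hM' : IsHalf (fun c => es c.1) (fun c => et c.1) M')
    (hstab : StableStrict (fun c => es c.1) (fun c => et c.1) pref' M') :
    ∀ N : E → ℝ, IsHalf es et N → WeaklyStable es et p pE N →
      size N ≤ 3 / 2 * size (fun e => ∑ k : Fin 3, M' (e, k)) := by
  classical
  intro N hN hws
  set M : E → ℝ := fun e => ∑ k : Fin 3, M' (e, k) with hMdef
  have hMnn : ∀ f, 0 ≤ M f := fun f => Finset.sum_nonneg fun k _ => hM'.1.1 (f, k)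
  have hMdeg : ∀ v, degSum es et M v ≤ 1 := fun v => by
    have h := hM'.1.2 v
    rw [deg_eq_aux] at h
    exact h
  have hNnn : ∀ f, 0 ≤ N f := hN.1.1
  have hNdeg : ∀ v, degSum es et N v ≤ 1 := hN.1.2
  -- the key lemma, rephrased using `otherEndA`
  have key : ∀ (e : E) (v : V), (es e = v ∨ et e = v) →
      degSum es et M (otherEndA es et e v) < 1 →
      degSum es et M v = 1 ∧ ∀ g : E, ∀ k : Fin 3, (es g = v ∨ et g = v) →
        0 < M' (g, k) →
        (ownCopy es et v (g, k) ∧ p v e ≤ p v g) ∨ (k = 1 ∧ p v e < p v g) := by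
    intro e v hv hu
    simp only [otherEndA] at hu
    by_cases hes : es e = v
    · rw [if_pos hes] at hu
      exact keyA es et hne p pref' hlin hi hiii hiv M' hM' hstab e (et e) v
        (Or.inr ⟨hes, rfl⟩) hu
    · have het : et e = v := hv.resolve_left hes
      rw [if_neg hes] at hu
      exact keyA es et hne p pref' hlin hi hiii hiv M' hM' hstab e (es e) v
        (Or.inl ⟨rfl, het⟩) hu
  -- no M-positive edge joins two needy vertices
  have claimB : ∀ f, 0 < M f → NeedyA es et N M (es f) → NeedyA es et N M (et f) →
      False := by
    intro f hMf n1 n2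
    obtain ⟨e, he, hNe, hu⟩ := n1
    obtain ⟨e', he', hNe', hu'⟩ := n2
    obtain ⟨hsat1, key1⟩ := key e (es f) he hu
    obtain ⟨hsat2, key2⟩ := key e' (et f) he' hu'
    obtain ⟨k, hk⟩ : ∃ k, 0 < M' (f, k) := by
      by_contra hcon
      push_neg at hcon
      have h0 : M f ≤ 0 := Finset.sum_nonpos fun k _ => hcon k
      linarith
    have c1 := key1 f k (Or.inl rfl) hk
    have c2 := key2 f k (Or.inr rfl) hk
    have d1 : k = 0 ∨ k = 1 := by
      rcases c1 with ⟨hown, _⟩ | ⟨h1, _⟩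
      · rcases hown with ⟨_, h0⟩ | ⟨hbad, _⟩
        · exact Or.inl h0
        · exact absurd hbad (hne f)
      · exact Or.inr h1
    have d2 : k = 2 ∨ k = 1 := by
      rcases c2 with ⟨hown, _⟩ | ⟨h1, _⟩
      · rcases hown with ⟨hbad, _⟩ | ⟨_, h2⟩
        · exact absurd hbad (Ne.symm (hne f))
        · exact Or.inl h2
      · exact Or.inr h1
    have hk1 : k = 1 := by
      rcases d1 with h | h
      · rcases d2 with h' | h'
        · rw [h] at h'; exact absurd h' (by decide)
        · exact h'
      · exact h
    subst hk1
    have hp1 : p (es f) e < p (es f) f := by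
      rcases c1 with ⟨hown, _⟩ | ⟨_, hp1⟩
      · rcases hown with ⟨_, h0⟩ | ⟨hbad, _⟩
        · exact absurd (show (1:Fin 3) = 0 from h0) (by decide)
        · exact absurd hbad (hne f)
      · exact hp1
    have hp2 : p (et f) e' < p (et f) f := by
      rcases c2 with ⟨hown, _⟩ | ⟨_, hp2⟩
      · rcases hown with ⟨hbad, _⟩ | ⟨_, h2⟩
        · exact absurd hbad (Ne.symm (hne f))
        · exact absurd (show (1:Fin 3) = 2 from h2) (by decide)
      · exact hp2
    have hef : e ≠ f := by
      intro hh
      subst hh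
      rw [otherEndA_s] at hu
      linarith
    have hinc_e : e ∈ incident es et (es f) := by
      simpa [incident] using he
    have hinc_f : f ∈ incident es et (es f) := by
      simp [incident]
    have hinc_e' : e' ∈ incident es et (et f) := by
      simpa [incident] using he'
    have hsum : N e + N f ≤ degSum es et N (es f) :=
      Finset.add_le_sum (fun i _ => hNnn i) hinc_e hinc_f hef
    have hNf : N f < 1 := by
      have h := hNdeg (es f); linarith
    exact hws f ⟨hNf,
      lt_of_le_of_lt (pval_le_aux es et p pE N (es f) e hinc_e hNe
        (hp _ e hinc_e) (hpE _)) hp1,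
      lt_of_le_of_lt (pval_le_aux es et p pE N (et f) e' hinc_e' hNe'
        (hp _ e' hinc_e') (hpE _)) hp2⟩
  -- the fractional vertex-cover weights
  set wt : E → V → ℝ := fun f v =>
    if NeedyA es et N M v then 1
    else if NeedyA es et N M (otherEndA es et f v) then 1/2 else 3/4 with hwtdef
  set y : V → ℝ := fun v => ∑ f ∈ incident es et v, M f * wt f v with hydef
  have hy_eq : ∀ v, y v = ∑ f ∈ incident es et v, M f * wt f v := fun v => rfl
  have hwt_half : ∀ f v, 1/2 ≤ wt f v := by
    intro f v
    simp only [hwtdef]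
    split_ifs <;> norm_num
  have hy_nn : ∀ v, 0 ≤ y v := fun v =>
    Finset.sum_nonneg fun f _ =>
      mul_nonneg (hMnn f) (le_trans (by norm_num) (hwt_half f v))
  have hy_half : ∀ v, 1/2 * degSum es et M v ≤ y v := by
    intro v
    rw [hy_eq, degSum, Finset.mul_sum]
    refine Finset.sum_le_sum fun f _ => ?_
    rw [mul_comm (M f)]
    exact mul_le_mul_of_nonneg_right (hwt_half f v) (hMnn f)
  have hy_needy : ∀ v, NeedyA es et N M v → y v = 1 := by
    intro v hv
    obtain ⟨e, he, hNe, hu⟩ := hv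
    have hsat := (key e v he hu).1
    have hwt1 : ∀ f, wt f v = 1 := by
      intro f; simp only [hwtdef]; rw [if_pos ⟨e, he, hNe, hu⟩]
    rw [hy_eq]
    calc ∑ f ∈ incident es et v, M f * wt f v
        = ∑ f ∈ incident es et v, M f :=
          Finset.sum_congr rfl fun f _ => by rw [hwt1 f, mul_one]
      _ = 1 := hsat
  -- cover inequality on N-positive edges
  have hedge : ∀ e, 0 < N e → 1 ≤ y (es e) + y (et e) := by
    intro e hNe
    by_cases h1 : degSum es et M (es e) < 1
    · have hn : NeedyA es et N M (et e) :=
        ⟨e, Or.inr rfl, hNe, by simp only [otherEndA]; rw [if_neg (hne e)]; exact h1⟩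
      have ha := hy_needy _ hn
      have hb := hy_nn (es e)
      linarith
    · by_cases h2 : degSum es et M (et e) < 1
      · have hn : NeedyA es et N M (es e) :=
          ⟨e, Or.inl rfl, hNe, by simp only [otherEndA]; simpa using h2⟩
        have ha := hy_needy _ hn
        have hb := hy_nn (et e)
        linarith
      · have e1 : degSum es et M (es e) = 1 := le_antisymm (hMdeg _) (not_lt.1 h1)
        have e2 : degSum es et M (et e) = 1 := le_antisymm (hMdeg _) (not_lt.1 h2)
        have ha := hy_half (es e); have hb := hy_half (et e)
        rw [e1] at ha; rw [e2] at hb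
        linarith
  -- total weight of the cover
  have hysum : ∑ v, y v ≤ 3/2 * ∑ f, M f := by
    have h := sum_incident_eq es et hne (fun f v => M f * wt f v)
    calc ∑ v, y v = ∑ f, (M f * wt f (es f) + M f * wt f (et f)) := by
          rw [← h]
      _ ≤ ∑ f, 3/2 * M f := by
          refine Finset.sum_le_sum fun f _ => ?_
          rcases lt_or_eq_of_le (hMnn f) with hMf | hMf
          · by_cases n1 : NeedyA es et N M (es f) <;> by_cases n2 : NeedyA es et N M (et f)
            · exact absurd n2 fun n2 => claimB f hMf n1 n2
            · have w1 : wt f (es f) = 1 := by simp only [hwtdef]; rw [if_pos n1]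
              have w2 : wt f (et f) = 1/2 := by
                simp only [hwtdef, otherEndA_t es et f (hne f)]
                rw [if_neg n2, if_pos n1]
              rw [w1, w2]; linarith
            · have w1 : wt f (es f) = 1/2 := by
                simp only [hwtdef, otherEndA_s]
                rw [if_neg n1, if_pos n2]
              have w2 : wt f (et f) = 1 := by simp only [hwtdef]; rw [if_pos n2]
              rw [w1, w2]; linarith
            · have w1 : wt f (es f) = 3/4 := by
                simp only [hwtdef, otherEndA_s]
                rw [if_neg n1, if_neg n2]
              have w2 : wt f (et f) = 3/4 := by
                simp only [hwtdef, otherEndA_t es et f (hne f)]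
                rw [if_neg n2, if_neg n1]
              rw [w1, w2]; linarith
          · rw [← hMf]; simp
      _ = 3/2 * ∑ f, M f := (Finset.mul_sum _ _ _).symm
  -- putting it all together
  have hsz : size N ≤ ∑ v, y v := by
    unfold size
    calc ∑ e, N e ≤ ∑ e, (N e * y (es e) + N e * y (et e)) := by
          refine Finset.sum_le_sum fun e _ => ?_
          rcases lt_or_eq_of_le (hNnn e) with h | h
          · have h1 := hedge e h
            have h2 := mul_le_mul_of_nonneg_left h1 (le_of_lt h)
            nlinarith [h2]
          · rw [← h]; simp
      _ = ∑ v, ∑ f ∈ incident es et v, N f * y v :=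
          (sum_incident_eq es et hne fun f v => N f * y v).symm
      _ = ∑ v, y v * degSum es et N v := by
          refine Finset.sum_congr rfl fun v _ => ?_
          rw [degSum, Finset.mul_sum]
          exact Finset.sum_congr rfl fun f _ => mul_comm _ _
      _ ≤ ∑ v, y v := by
          refine Finset.sum_le_sum fun v _ => ?_
          simpa using mul_le_mul_of_nonneg_left (hNdeg v) (hy_nn v)
  have hfin : (3 : ℝ)/2 * ∑ f, M f = 3 / 2 * size M := by rw [size]
  calc size N ≤ ∑ v, y v := hsz
    _ ≤ 3/2 * ∑ f, M f := hysum
    _ = 3 / 2 * size M := hfin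

end SR
end

section
/- In a roommates instance with strict preferences, every popular fractional-matching is barely-defendable, and every popular mixed-matching is barely-defendable. -/
open Finset

namespace SR

variable {V E : Type*} [Fintype V] [Fintype E] [DecidableEq V] [DecidableEq E]

/-! ### Auxiliary material -/
set_option linter.unusedSectionVars false

lemma sum_optIncident (es et : E → V) (v : V) (g : Option E → ℝ) :
    ∑ f ∈ optIncident es et v, g f = g none + ∑ e ∈ incident es et v, g (some e) := by
  rw [optIncident, Finset.sum_insert (by simp), Finset.sum_map]
  rfl

lemma vote_self (pref : V → E → E → Prop) (v : V) (a : Option E) :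
    vote pref v a a = 0 := by
  unfold vote; rw [if_pos rfl]

lemma vote_some_none (pref : V → E → E → Prop) (v : V) (e : E) :
    vote pref v (some e) none = 1 := by
  unfold vote; rw [if_neg (by simp), if_pos (c := prefExt pref v (some e) none) trivial]

lemma vote_none_some (pref : V → E → E → Prop) (v : V) (f : E) :
    vote pref v none (some f) = -1 := by
  unfold vote; rw [if_neg (by simp), if_neg (c := prefExt pref v none (some f)) (fun h => h)]

lemma degSum_nonneg (es et : E → V) {M : E → ℝ} (hM : ∀ e, 0 ≤ M e) (v : V) :
    0 ≤ degSum es et M v :=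
  Finset.sum_nonneg fun e _ => hM e

/-- `(M-N)⁺(e)`. -/
noncomputable def pplus (M N : E → ℝ) (e : E) : ℝ := max (M e - N e) 0

lemma pplus_nonneg (M N : E → ℝ) (e : E) : 0 ≤ pplus M N e := le_max_right _ _

lemma pplus_mul_pplus (M N : E → ℝ) (e : E) : pplus M N e * pplus N M e = 0 := by
  rcases le_total (M e) (N e) with h | h
  · have : pplus M N e = 0 := max_eq_right (by linarith)
    rw [this, zero_mul]
  · have : pplus N M e = 0 := max_eq_right (by linarith)
    rw [this, mul_zero]

lemma pplus_sub_pplus (M N : E → ℝ) (e : E) :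
    pplus M N e - pplus N M e = M e - N e := by
  rcases le_total (M e) (N e) with h | h
  · rw [pplus, pplus, max_eq_right (by linarith : M e - N e ≤ 0),
      max_eq_left (by linarith : (0:ℝ) ≤ N e - M e)]; ring
  · rw [pplus, pplus, max_eq_left (by linarith : (0:ℝ) ≤ M e - N e),
      max_eq_right (by linarith : N e - M e ≤ 0)]; ring

lemma pplus_add_min (M N : E → ℝ) (e : E) :
    pplus M N e + min (M e) (N e) = M e := by
  rcases le_total (M e) (N e) with h | h
  · rw [pplus, max_eq_right (by linarith : M e - N e ≤ 0), min_eq_left h]; ring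
  · rw [pplus, max_eq_left (by linarith : (0:ℝ) ≤ M e - N e), min_eq_right h]; ring

/-- `Σ_{e∈E(v)} (M-N)⁺(e)`. -/
noncomputable def asum (es et : E → V) (M N : E → ℝ) (v : V) : ℝ :=
  ∑ e ∈ incident es et v, pplus M N e

lemma asum_nonneg (es et : E → V) (M N : E → ℝ) (v : V) : 0 ≤ asum es et M N v :=
  Finset.sum_nonneg fun e _ => pplus_nonneg M N e

lemma asum_sub_asum (es et : E → V) (M N : E → ℝ) (v : V) :
    asum es et M N v - asum es et N M v = degSum es et M v - degSum es et N v := by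
  unfold asum degSum
  rw [← Finset.sum_sub_distrib, ← Finset.sum_sub_distrib]
  exact Finset.sum_congr rfl fun e _ => pplus_sub_pplus M N e

noncomputable def cmax (es et : E → V) (M N : E → ℝ) (v : V) : ℝ :=
  max (asum es et M N v) (asum es et N M v)

lemma cmax_comm (es et : E → V) (M N : E → ℝ) (v : V) :
    cmax es et M N v = cmax es et N M v := max_comm _ _

lemma cmax_nonneg (es et : E → V) (M N : E → ℝ) (v : V) : 0 ≤ cmax es et M N v :=
  le_trans (asum_nonneg es et M N v) (le_max_left _ _)

lemma asum_le_cmax (es et : E → V) (M N : E → ℝ) (v : V) :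
    asum es et M N v ≤ cmax es et M N v := le_max_left _ _

/-- The product pairing between `M` and `N`. -/
noncomputable def prodPair (es et : E → V) (M N : E → ℝ) (v : V) :
    Option E → Option E → ℝ
  | some e, some f => M e * N f
  | some e, none => M e * (1 - degSum es et N v)
  | none, some f => (1 - degSum es et M v) * N f
  | none, none => (1 - degSum es et M v) * (1 - degSum es et N v)

lemma prodPair_sensible (es et : E → V) (M N : E → ℝ)
    (hM : IsFrac es et M) (hN : IsFrac es et N) :
    SensiblePairing es et M N (prodPair es et M N) := by
  obtain ⟨hM0, hM1⟩ := hM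
  obtain ⟨hN0, hN1⟩ := hN
  refine ⟨?_, ?_, ?_, ?_, ?_, ?_⟩
  · intro v a b
    cases a <;> cases b <;>
      exact mul_nonneg (by first | exact hM0 _ | exact hN0 _ | linarith [hM1 v, hN1 v])
        (by first | exact hM0 _ | exact hN0 _ | linarith [hM1 v, hN1 v])
  · intro v e _
    rw [sum_optIncident]
    show M e * (1 - degSum es et N v) + ∑ f ∈ incident es et v, M e * N f = M e
    rw [← Finset.mul_sum]
    have : ∑ f ∈ incident es et v, N f = degSum es et N v := rfl
    rw [this]; ring
  · intro v e _
    rw [sum_optIncident]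
    show (1 - degSum es et M v) * N e + ∑ f ∈ incident es et v, M f * N e = N e
    rw [← Finset.sum_mul]
    have : ∑ f ∈ incident es et v, M f = degSum es et M v := rfl
    rw [this]; ring
  · intro v h
    have : ∑ f ∈ optIncident es et v, prodPair es et M N v none f
        = 1 - degSum es et M v := by
      rw [sum_optIncident]
      show (1 - degSum es et M v) * (1 - degSum es et N v)
          + ∑ f ∈ incident es et v, (1 - degSum es et M v) * N f = _
      rw [← Finset.mul_sum]
      have : ∑ f ∈ incident es et v, N f = degSum es et N v := rfl
      rw [this]; ring
    rw [this] at h; linarith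
  · intro v h
    have : ∑ f ∈ optIncident es et v, prodPair es et M N v f none
        = 1 - degSum es et N v := by
      rw [sum_optIncident]
      show (1 - degSum es et M v) * (1 - degSum es et N v)
          + ∑ f ∈ incident es et v, M f * (1 - degSum es et N v) = _
      rw [← Finset.sum_mul]
      have : ∑ f ∈ incident es et v, M f = degSum es et M v := rfl
      rw [this]; ring
    rw [this] at h; linarith
  · intro e; rfl

lemma delta_prodPair (es et : E → V) (pref : V → E → E → Prop) (M N : E → ℝ) :
    Delta es et pref (prodPair es et M N) = mixedScore es et pref M N := by
  unfold Delta mixedScore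
  refine Finset.sum_congr rfl fun v _ => ?_
  rw [sum_optIncident es et v
    (fun a => ∑ b ∈ optIncident es et v, prodPair es et M N v a b * vote pref v a b),
    sum_optIncident es et v (fun b => prodPair es et M N v none b * vote pref v none b)]
  have hrow : ∀ e : E,
      (∑ b ∈ optIncident es et v, prodPair es et M N v (some e) b * vote pref v (some e) b)
      = M e * (1 - degSum es et N v) * vote pref v (some e) none
        + ∑ f ∈ incident es et v, M e * N f * vote pref v (some e) (some f) := by
    intro e
    rw [sum_optIncident es et v
      (fun b => prodPair es et M N v (some e) b * vote pref v (some e) b)]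
    rfl
  rw [Finset.sum_congr rfl fun e _ => hrow e, Finset.sum_add_distrib]
  have h1 : prodPair es et M N v none none * vote pref v none none = 0 := by
    rw [vote_self, mul_zero]
  have h2 : ∑ f ∈ incident es et v, prodPair es et M N v none (some f) * vote pref v none (some f)
      = ∑ f ∈ incident es et v, N f * (1 - degSum es et M v) * vote pref v none (some f) := by
    refine Finset.sum_congr rfl fun f _ => ?_
    show (1 - degSum es et M v) * N f * _ = _
    ring
  rw [h1, h2]
  ring

/-- The canonical feasible pairing between `M` and `N`. -/
noncomputable def canonPair (es et : E → V) (M N : E → ℝ) (v : V) :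
    Option E → Option E → ℝ
  | some e, some f => pplus M N e * pplus N M f / cmax es et M N v
  | some e, none => pplus M N e * (cmax es et M N v - asum es et N M v) / cmax es et M N v
  | none, some f => pplus N M f * (cmax es et M N v - asum es et M N v) / cmax es et M N v
  | none, none => 0

lemma canon_symm (es et : E → V) (M N : E → ℝ) (v : V) (a b : Option E) :
    canonPair es et M N v a b = canonPair es et N M v b a := by
  cases a <;> cases b <;> simp only [canonPair]
  · rw [cmax_comm]
  · rw [cmax_comm]
  · rw [cmax_comm, mul_comm]

lemma canon_nonneg (es et : E → V) (M N : E → ℝ) (v : V) (a b : Option E) :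
    0 ≤ canonPair es et M N v a b := by
  cases a <;> cases b <;> simp only [canonPair] <;>
  · first
    | exact le_refl 0
    | exact div_nonneg (mul_nonneg (pplus_nonneg _ _ _)
        (by first
          | exact pplus_nonneg _ _ _
          | · rw [sub_nonneg]
              first
              | exact asum_le_cmax es et M N v
              | · rw [cmax_comm]; exact asum_le_cmax es et N M v))
        (cmax_nonneg es et M N v)

lemma canon_row (es et : E → V) (M N : E → ℝ) (v : V) (e : E)
    (he : e ∈ incident es et v) :
    ∑ f ∈ optIncident es et v, canonPair es et M N v (some e) f = pplus M N e := by
  rw [sum_optIncident]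
  show pplus M N e * (cmax es et M N v - asum es et N M v) / cmax es et M N v
      + ∑ f ∈ incident es et v, pplus M N e * pplus N M f / cmax es et M N v = _
  have hB : ∑ f ∈ incident es et v, pplus M N e * pplus N M f
      = pplus M N e * asum es et N M v := by
    rw [asum, Finset.mul_sum]
  rw [← Finset.sum_div, hB]
  by_cases hC : cmax es et M N v = 0
  · have hA : asum es et M N v = 0 :=
      le_antisymm (hC ▸ asum_le_cmax es et M N v) (asum_nonneg es et M N v)
    have he0 : pplus M N e = 0 := by
      have := (Finset.sum_eq_zero_iff_of_nonneg
        (fun f _ => pplus_nonneg M N f)).mp hA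
      exact this e he
    rw [he0]; simp
  · field_simp
    ring

lemma canon_none_row (es et : E → V) (M N : E → ℝ) (v : V) :
    ∑ f ∈ optIncident es et v, canonPair es et M N v none f
      = max (degSum es et N v - degSum es et M v) 0 := by
  rw [sum_optIncident]
  show 0 + ∑ f ∈ incident es et v,
      pplus N M f * (cmax es et M N v - asum es et M N v) / cmax es et M N v = _
  have hB : ∑ f ∈ incident es et v,
      pplus N M f * (cmax es et M N v - asum es et M N v)
      = asum es et N M v * (cmax es et M N v - asum es et M N v) := by
    rw [← Finset.sum_mul]
    rfl
  rw [← Finset.sum_div, hB, zero_add]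
  have hd : degSum es et N v - degSum es et M v
      = asum es et N M v - asum es et M N v := (asum_sub_asum es et N M v).symm
  rw [hd]
  set A := asum es et M N v with hA
  set B := asum es et N M v with hBB
  rcases le_total B A with h | h
  · have hC : cmax es et M N v = A := max_eq_left h
    rw [hC, max_eq_right (by linarith : B - A ≤ 0)]
    by_cases hA0 : A = 0
    · have hB0 : B = 0 := le_antisymm (hA0 ▸ h) (asum_nonneg es et N M v)
      rw [hA0, hB0]; simp
    · rw [sub_self, mul_zero, zero_div]
  · have hC : cmax es et M N v = B := max_eq_right h
    rw [hC, max_eq_left (by linarith : (0:ℝ) ≤ B - A)]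
    by_cases hB0 : B = 0
    · have hA0 : A = 0 := le_antisymm (hB0 ▸ h) (asum_nonneg es et M N v)
      rw [hA0, hB0]; simp
    · field_simp

lemma canon_col (es et : E → V) (M N : E → ℝ) (v : V) (e : E)
    (he : e ∈ incident es et v) :
    ∑ f ∈ optIncident es et v, canonPair es et M N v f (some e) = pplus N M e := by
  have := canon_row es et N M v e (by
    simpa [incident] using he)
  rw [← this]
  exact Finset.sum_congr rfl fun f _ => canon_symm es et M N v f (some e)

lemma canon_none_col (es et : E → V) (M N : E → ℝ) (v : V) :
    ∑ f ∈ optIncident es et v, canonPair es et M N v f none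
      = max (degSum es et M v - degSum es et N v) 0 := by
  rw [← canon_none_row es et N M v]
  exact Finset.sum_congr rfl fun f _ => canon_symm es et M N v f none

lemma canon_feasible (es et : E → V) (M N : E → ℝ) :
    FeasiblePairing es et M N (canonPair es et M N) :=
  ⟨canon_nonneg es et M N,
   fun v e he => canon_row es et M N v e he,
   fun v e he => canon_col es et M N v e he,
   fun v => canon_none_col es et M N v,
   fun v => canon_none_row es et M N v⟩

/-- The sensible extension of the canonical pairing. -/
noncomputable def sensPair (es et : E → V) (M N : E → ℝ) (v : V) :
    Option E → Option E → ℝ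
  | some e, some f => canonPair es et M N v (some e) (some f)
      + if e = f then min (M e) (N e) else 0
  | some e, none => canonPair es et M N v (some e) none
  | none, some f => canonPair es et M N v none (some f)
  | none, none => min (1 - degSum es et M v) (1 - degSum es et N v)

lemma min_add_max_aux (x y : ℝ) :
    min (1 - x) (1 - y) + max (y - x) 0 = 1 - x := by
  rcases le_total x y with h | h
  · rw [min_eq_right (by linarith), max_eq_left (by linarith)]; ring
  · rw [min_eq_left (by linarith), max_eq_right (by linarith)]; ring

lemma sens_none_row (es et : E → V) (M N : E → ℝ) (v : V) :
    ∑ f ∈ optIncident es et v, sensPair es et M N v none f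
      = min (1 - degSum es et M v) (1 - degSum es et N v)
        + max (degSum es et N v - degSum es et M v) 0 := by
  rw [sum_optIncident]
  have h := canon_none_row es et M N v
  rw [sum_optIncident] at h
  show min (1 - degSum es et M v) (1 - degSum es et N v)
      + ∑ f ∈ incident es et v, canonPair es et M N v none (some f) = _
  have h0 : canonPair es et M N v none none = 0 := rfl
  rw [h0, zero_add] at h
  rw [h]

lemma sens_none_col (es et : E → V) (M N : E → ℝ) (v : V) :
    ∑ f ∈ optIncident es et v, sensPair es et M N v f none
      = min (1 - degSum es et M v) (1 - degSum es et N v)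
        + max (degSum es et M v - degSum es et N v) 0 := by
  rw [sum_optIncident]
  have h := canon_none_col es et M N v
  rw [sum_optIncident] at h
  show min (1 - degSum es et M v) (1 - degSum es et N v)
      + ∑ f ∈ incident es et v, canonPair es et M N v (some f) none = _
  have h0 : canonPair es et M N v none none = 0 := rfl
  rw [h0, zero_add] at h
  rw [h]

lemma sens_sensible (es et : E → V) (M N : E → ℝ)
    (hM : IsFrac es et M) (hN : IsFrac es et N) :
    SensiblePairing es et M N (sensPair es et M N) := by
  obtain ⟨hM0, hM1⟩ := hM
  obtain ⟨hN0, hN1⟩ := hN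
  refine ⟨?_, ?_, ?_, ?_, ?_, ?_⟩
  · intro v a b
    cases a with
    | none =>
      cases b with
      | none => exact le_min (by linarith [hM1 v]) (by linarith [hN1 v])
      | some f => exact canon_nonneg es et M N v none (some f)
    | some e =>
      cases b with
      | none => exact canon_nonneg es et M N v (some e) none
      | some f =>
        have h1 := canon_nonneg es et M N v (some e) (some f)
        have h2 : (0:ℝ) ≤ if e = f then min (M e) (N e) else 0 := by
          split
          · exact le_min (hM0 e) (hN0 e)
          · exact le_refl 0
        exact add_nonneg h1 h2
  · intro v e he
    rw [sum_optIncident]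
    have h := canon_row es et M N v e he
    rw [sum_optIncident] at h
    show canonPair es et M N v (some e) none
        + ∑ f ∈ incident es et v, (canonPair es et M N v (some e) (some f)
          + if e = f then min (M e) (N e) else 0) = M e
    rw [Finset.sum_add_distrib, Finset.sum_ite_eq, if_pos he]
    have := pplus_add_min M N e
    linarith
  · intro v e he
    rw [sum_optIncident]
    have h := canon_col es et M N v e he
    rw [sum_optIncident] at h
    show canonPair es et M N v none (some e)
        + ∑ f ∈ incident es et v, (canonPair es et M N v (some f) (some e)
          + if f = e then min (M f) (N f) else 0) = N e
    rw [Finset.sum_add_distrib, Finset.sum_ite_eq', if_pos he]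
    have := pplus_add_min N M e
    have hmc : min (M e) (N e) = min (N e) (M e) := min_comm _ _
    linarith
  · intro v h
    rw [sens_none_row] at h
    have := min_add_max_aux (degSum es et M v) (degSum es et N v)
    linarith
  · intro v h
    rw [sens_none_col] at h
    have := min_add_max_aux (degSum es et N v) (degSum es et M v)
    have hmc : min (1 - degSum es et M v) (1 - degSum es et N v)
        = min (1 - degSum es et N v) (1 - degSum es et M v) := min_comm _ _
    linarith
  · intro e
    show canonPair es et M N (es e) (some e) (some e) + _
        = canonPair es et M N (et e) (some e) (some e) + _
    have h1 : canonPair es et M N (es e) (some e) (some e) = 0 := by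
      show pplus M N e * pplus N M e / _ = 0
      rw [pplus_mul_pplus, zero_div]
    have h2 : canonPair es et M N (et e) (some e) (some e) = 0 := by
      show pplus M N e * pplus N M e / _ = 0
      rw [pplus_mul_pplus, zero_div]
    rw [h1, h2]

lemma delta_sens (es et : E → V) (pref : V → E → E → Prop) (M N : E → ℝ) :
    Delta es et pref (sensPair es et M N) = Delta es et pref (canonPair es et M N) := by
  unfold Delta
  refine Finset.sum_congr rfl fun v _ => Finset.sum_congr rfl fun a _ =>
    Finset.sum_congr rfl fun b _ => ?_
  by_cases hab : a = b
  · subst hab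
    rw [vote_self, mul_zero, mul_zero]
  · congr 1
    match a, b with
    | some e, some f =>
      have hef : e ≠ f := fun h => hab (by rw [h])
      show canonPair es et M N v (some e) (some f) + _ = _
      rw [if_neg hef, add_zero]
    | some e, none => rfl
    | none, some f => rfl
    | none, none => exact absurd rfl hab

/-- Every popular fractional-matching is barely-defendable,
and every popular mixed-matching is barely-defendable. -/
theorem barelyDefendable_of_popular
    {V E : Type*} [Fintype V] [Fintype E] [DecidableEq V] [DecidableEq E]
    (es et : E → V) (hne : ∀ e, es e ≠ et e)
    (pref : V → E → E → Prop) (hpref : IsStrictPref es et pref)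
    (M : E → ℝ) (hM : IsFrac es et M) :
    (PopularFrac es et pref M → BarelyDefendable es et pref M) ∧
    (PopularMixed es et pref M → BarelyDefendable es et pref M) := by
  constructor
  · intro hpop N hN
    exact ⟨sensPair es et M N, sens_sensible es et M N hM hN, by
      rw [delta_sens]
      exact hpop N hN _ (canon_feasible es et M N)⟩
  · intro hpop N hN
    exact ⟨prodPair es et M N, prodPair_sensible es et M N hM hN, by
      rw [delta_prodPair]
      exact hpop N hN⟩

end SR
end
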